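/- Let E be a row-finite graph and u, v ∈ E^0. If the ℤ-order-ideals ⟨u⟩ and ⟨v⟩ of M_E^{gr} have nonzero intersection, then u and v are downward directed: there exists w ∈ E^0 with a path from u to w and a path from v to w. -/

import Mathlib

set_option linter.unusedSectionVars false

/-- The algebraic preorder on a commutative monoid: `a ≤ b` iff `b = a + c` for some `c`. -/
def algLE {M : Type*} [AddCommMonoid M] (a b : M) : Prop := ∃ c, b = a + c

/-- A row-finite directed graph: vertices `V`, edges `Ed`, source `s`, range `r`,
and for each vertex the (finite) set of edges it emits. -/
structure RFGraph (V : Type) (Ed : Type) where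
  s : Ed → V
  r : Ed → V
  emit : V → Finset Ed
  mem_emit : ∀ e v, e ∈ emit v ↔ s e = v

namespace RFGraph

variable {V Ed : Type} [DecidableEq V] (G : RFGraph V Ed)

/-- The one-step rewriting relation `→₁` on the free commutative monoid `Multiset V`:
replace one occurrence of a non-sink vertex `v` by the sum of ranges of edges emitted by `v`. -/
def Step1 (a b : Multiset V) : Prop :=
  ∃ v : V, v ∈ a ∧ G.emit v ≠ ∅ ∧ b = a.erase v + (G.emit v).val.map G.r

/-- The reflexive-transitive closure `→` of `→₁`. -/
def Step : Multiset V → Multiset V → Prop := Relation.ReflTransGen G.Step1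

/-- The congruence on the free commutative monoid generated by `→₁`. -/
def gcon : AddCon (Multiset V) := addConGen G.Step1

/-- The graph monoid `M_E`. -/
def GM := G.gcon.Quotient

instance : AddCommMonoid G.GM := inferInstanceAs (AddCommMonoid G.gcon.Quotient)

/-- One-step rewriting for the talented monoid: replace `v(i)` by `Σ_{e ∈ s⁻¹(v)} r(e)(i+1)`. -/
def TStep1 (a b : Multiset (V × ℤ)) : Prop :=
  ∃ (v : V) (i : ℤ), (v, i) ∈ a ∧ G.emit v ≠ ∅ ∧
    b = a.erase (v, i) + (G.emit v).val.map (fun e => (G.r e, i + 1))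

/-- The congruence generated by the talented one-step relation. -/
def tcon : AddCon (Multiset (V × ℤ)) := addConGen G.TStep1

/-- The talented monoid `M_E^{gr}`. -/
def TM := G.tcon.Quotient

instance : AddCommMonoid G.TM := inferInstanceAs (AddCommMonoid G.tcon.Quotient)

/-- The generator `v(i)` of the talented monoid. -/
def tgen (v : V) (i : ℤ) : G.TM := G.tcon.mk' {(v, i)}

/-- The shift `v(i) ↦ v(i+n)` on the free commutative monoid `Multiset (V × ℤ)`. -/
def shiftMul (n : ℤ) : Multiset (V × ℤ) →+ Multiset (V × ℤ) where
  toFun a := a.map fun p => (p.1, p.2 + n)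
  map_zero' := rfl
  map_add' a b := Multiset.map_add (fun p => (p.1, p.2 + n)) a b

lemma shift_inj (n : ℤ) : Function.Injective (fun p : V × ℤ => (p.1, p.2 + n)) := by
  rintro ⟨a, b⟩ ⟨c, d⟩ h
  simp only [Prod.mk.injEq] at h
  exact Prod.ext h.1 (by omega)

lemma tstep1_shift (n : ℤ) {a b : Multiset (V × ℤ)} (h : G.TStep1 a b) :
    G.TStep1 (shiftMul n a) (shiftMul n b) := by
  obtain ⟨v, i, hv, hne, rfl⟩ := h
  refine ⟨v, i + n, Multiset.mem_map.2 ⟨(v, i), hv, rfl⟩, hne, ?_⟩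
  show Multiset.map _ _ = _
  rw [Multiset.map_add]
  congr 1
  · exact (Multiset.map_erase _ (shift_inj n) (v, i) a)
  · rw [Multiset.map_map]
    congr 1
    funext e
    simp only [Function.comp_apply]
    congr 1
    omega

lemma tcon_shift (n : ℤ) {a b : Multiset (V × ℤ)} (h : G.tcon a b) :
    G.tcon (shiftMul n a) (shiftMul n b) := by
  have hle : addConGen G.TStep1 ≤
      { r := fun a b => G.tcon (shiftMul n a) (shiftMul n b)
        iseqv := ⟨fun _ => G.tcon.refl _, fun h => G.tcon.symm h,
          fun h₁ h₂ => G.tcon.trans h₁ h₂⟩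
        add' := fun h₁ h₂ => by
          simpa only [map_add] using G.tcon.add h₁ h₂ } := by
    refine AddCon.addConGen_le.2 ?_
    intro x y hxy
    exact AddConGen.Rel.of _ _ (G.tstep1_shift n hxy)
  exact hle h

/-- The `ℤ`-action on the talented monoid, `ⁿ(v(i)) = v(i+n)`. -/
def tshift (n : ℤ) : G.TM →+ G.TM :=
  G.tcon.lift (G.tcon.mk'.comp (shiftMul n)) (by
    intro a b h
    show G.tcon.mk' (shiftMul n a) = G.tcon.mk' (shiftMul n b)
    exact (AddCon.eq _).2 (G.tcon_shift n h))

/-- Reachability: there is a (possibly trivial) path from `u` to `v`. -/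
def Reaches (u v : V) : Prop :=
  Relation.ReflTransGen (fun a b => ∃ e : Ed, G.s e = a ∧ G.r e = b) u v

/-- A cycle: a nonempty path of edges, closed up, with distinct source vertices. -/
def IsCycle (p : List Ed) : Prop :=
  ∃ h : p ≠ [], List.Chain' (fun e f => G.r e = G.s f) p ∧
    G.r (p.getLast h) = G.s (p.head h) ∧ (p.map G.s).Nodup

/-- The cycle `p` has an exit: some vertex on it emits an edge not on the cycle. -/
def HasExit (p : List Ed) : Prop :=
  ∃ e : Ed, (∃ f ∈ p, G.s e = G.s f) ∧ e ∉ p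

/-- The cycle `p` has no exit: every vertex on it emits exactly its cycle edge. -/
def NoExit (p : List Ed) : Prop :=
  ∀ e ∈ p, G.emit (G.s e) = {e}

/-- `ℤ`-order-ideals of the talented monoid. -/
def IsOrderIdeal (I : Set G.TM) : Prop :=
  (0 : G.TM) ∈ I ∧ (∀ a b : G.TM, a ∈ I → b ∈ I → a + b ∈ I) ∧
    (∀ (n : ℤ) (a : G.TM), a ∈ I → G.tshift n a ∈ I) ∧
    (∀ a b : G.TM, algLE a b → b ∈ I → a ∈ I)

/-- The smallest `ℤ`-order-ideal of `M_E^{gr}` containing `v(0)`. -/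
def genIdeal (v : V) : Set G.TM :=
  ⋂₀ {I : Set G.TM | G.IsOrderIdeal I ∧ G.tgen v 0 ∈ I}

/-- Minimality in the talented monoid: `0 ≠ b ≤ a` implies `a ≤ b`. -/
def TMin (a : G.TM) : Prop := ∀ b : G.TM, b ≠ 0 → algLE b a → algLE a b

/-- The covering graph `\bar E`. -/
def cover : RFGraph (V × ℤ) (Ed × ℤ) where
  s p := (G.s p.1, p.2)
  r p := (G.r p.1, p.2 + 1)
  emit p := (G.emit p.1).map ⟨fun e => (e, p.2), fun a b h => by
    simpa using congrArg Prod.fst h⟩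
  mem_emit := by
    rintro ⟨e, n⟩ ⟨v, m⟩
    simp only [Finset.mem_map, Function.Embedding.coeFn_mk, Prod.mk.injEq, G.mem_emit]
    constructor
    · rintro ⟨a, ha, rfl, rfl⟩; exact ⟨ha, rfl⟩
    · rintro ⟨rfl, rfl⟩
      first
        | exact ⟨e, (G.mem_emit e _).2 rfl, rfl⟩
        | exact ⟨e, rfl, rfl⟩
        | exact ⟨e, (G.mem_emit e _).2 rfl, rfl, rfl⟩

/-- The set of vertices on a cycle. -/
def cycVerts (p : List Ed) : Set V := {v | ∃ e ∈ p, G.s e = v}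

end RFGraph

/-!
The relation `v(i) → Σ_{e ∈ s⁻¹(v)} r(e)(i+1)` on the free commutative monoid `Multiset (V × ℤ)`
is confluent, because expansions of two different occurrences commute. Hence two multisets
represent the same element of `M_E^{gr}` iff they have a common descendant. Since expanding only
ever introduces vertices reachable from the expanded one, the classes of multisets supported on
vertices reachable from `u` form a `ℤ`-order-ideal containing `u(0)`, so they contain `⟨u⟩`.
A common descendant of representatives of a nonzero element of `⟨u⟩ ∩ ⟨v⟩` is nonzero, and any
vertex occurring in it is reachable from both `u` and `v`.
-/

section ExpandStep

variable {α : Type*} [DecidableEq α]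

def ExpandStep (S : α → Prop) (f : α → Multiset α) (a b : Multiset α) : Prop :=
  ∃ x ∈ a, S x ∧ b = a.erase x + f x

variable {S : α → Prop} {f : α → Multiset α}

local notation "Expands" => Relation.ReflTransGen (ExpandStep S f)

lemma ExpandStep.add_right {a b : Multiset α} (h : ExpandStep S f a b) (c : Multiset α) :
    ExpandStep S f (a + c) (b + c) := by
  obtain ⟨x, hx, hS, rfl⟩ := h
  exact ⟨x, Multiset.mem_add.2 (Or.inl hx), hS, by
    rw [Multiset.erase_add_left_pos _ hx, add_right_comm]⟩

lemma reflTransGen_expandStep_add {a b c d : Multiset α} (hab : Expands a b) (hcd : Expands c d) :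
    Expands (a + c) (b + d) := by
  have hcd' : Expands (c + b) (d + b) := hcd.lift (· + b) fun _ _ h => h.add_right b
  rw [add_comm c, add_comm d] at hcd'
  exact (hab.lift (· + c) fun _ _ h => h.add_right c).trans hcd'

lemma ExpandStep.diamond {a b c : Multiset α} (hab : ExpandStep S f a b)
    (hac : ExpandStep S f a c) :
    ∃ d, Relation.ReflGen (ExpandStep S f) b d ∧ Expands c d := by
  obtain ⟨x, hx, hSx, rfl⟩ := hab
  obtain ⟨y, hy, hSy, rfl⟩ := hac
  obtain rfl | hxy := eq_or_ne x y
  · exact ⟨_, .refl, .refl⟩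
  have hy' : y ∈ a.erase x := (Multiset.mem_erase_of_ne hxy.symm).2 hy
  have hx' : x ∈ a.erase y := (Multiset.mem_erase_of_ne hxy).2 hx
  refine ⟨(a.erase x).erase y + f y + f x,
    .single ⟨y, Multiset.mem_add.2 (Or.inl hy'), hSy, ?_⟩,
    .single ⟨x, Multiset.mem_add.2 (Or.inl hx'), hSx, ?_⟩⟩
  · rw [Multiset.erase_add_left_pos _ hy', add_right_comm]
  · rw [Multiset.erase_add_left_pos _ hx', add_right_comm, Multiset.erase_comm, add_right_comm]

/-- By confluence, having a common descendant is a congruence. -/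
def commonDescendantCon (S : α → Prop) (f : α → Multiset α) : AddCon (Multiset α) where
  r := Relation.Join (Relation.ReflTransGen (ExpandStep S f))
  iseqv := Relation.equivalence_join_reflTransGen fun _ _ _ => ExpandStep.diamond
  add' := fun ⟨d₁, hw, hx⟩ ⟨d₂, hy, hz⟩ =>
    ⟨d₁ + d₂, reflTransGen_expandStep_add hw hy, reflTransGen_expandStep_add hx hz⟩

lemma addConGen_expandStep_iff_join {a b : Multiset α} :
    addConGen (ExpandStep S f) a b ↔ Relation.Join Expands a b := by
  constructor
  · intro h
    exact (AddCon.addConGen_le.2 fun _ y hxy => ⟨y, .single hxy, .refl⟩ :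
      addConGen (ExpandStep S f) ≤ commonDescendantCon S f) h
  · rintro ⟨d, had, hbd⟩
    have of_expands {a d : Multiset α} (h : Expands a d) : addConGen (ExpandStep S f) a d := by
      induction h with
      | refl => exact (addConGen _).refl _
      | tail _ hstep ih => exact (addConGen _).trans ih (.of _ _ hstep)
    exact (addConGen _).trans (of_expands had) ((addConGen _).symm (of_expands hbd))

lemma exists_add_of_reflTransGen_expandStep {a c d : Multiset α} (h : Expands (a + c) d) :
    ∃ d₁ d₂, d = d₁ + d₂ ∧ Expands a d₁ ∧ Expands c d₂ := by
  induction h with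
  | refl => exact ⟨a, c, rfl, .refl, .refl⟩
  | tail _ hstep ih =>
    obtain ⟨d₁, d₂, rfl, h₁, h₂⟩ := ih
    obtain ⟨x, hx, hS, rfl⟩ := hstep
    rcases Multiset.mem_add.1 hx with hx₁ | hx₂
    · refine ⟨d₁.erase x + f x, d₂, ?_, h₁.tail ⟨x, hx₁, hS, rfl⟩, h₂⟩
      rw [Multiset.erase_add_left_pos _ hx₁, add_right_comm]
    · refine ⟨d₁, d₂.erase x + f x, ?_, h₁, h₂.tail ⟨x, hx₂, hS, rfl⟩⟩
      rw [Multiset.erase_add_right_pos _ hx₂, add_assoc]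

def IsExpandClosed (S : α → Prop) (f : α → Multiset α) (T : Set α) : Prop :=
  ∀ x ∈ T, S x → ∀ y ∈ f x, y ∈ T

lemma IsExpandClosed.forall_mem {T : Set α} (hT : IsExpandClosed S f T) {a b : Multiset α}
    (hab : Expands a b) (ha : ∀ x ∈ a, x ∈ T) : ∀ x ∈ b, x ∈ T := by
  induction hab with
  | refl => exact ha
  | tail _ hstep ih =>
    obtain ⟨x, hx, hS, rfl⟩ := hstep
    intro y hy
    rcases Multiset.mem_add.1 hy with hy | hy
    · exact ih y (Multiset.mem_of_mem_erase hy)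
    · exact hT x (ih x hx) hS y hy

lemma IsExpandClosed.exists_mem_inter {T₁ T₂ : Set α} (h₁ : IsExpandClosed S f T₁)
    (h₂ : IsExpandClosed S f T₂) {a b : Multiset α} (hab : addConGen (ExpandStep S f) a b)
    (ha0 : ¬ addConGen (ExpandStep S f) a 0) (ha : ∀ x ∈ a, x ∈ T₁) (hb : ∀ x ∈ b, x ∈ T₂) :
    ∃ x, x ∈ T₁ ∧ x ∈ T₂ := by
  obtain ⟨d, had, hbd⟩ := addConGen_expandStep_iff_join.1 hab
  have hd0 : d ≠ 0 := by
    rintro rfl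
    exact ha0 (addConGen_expandStep_iff_join.2 ⟨0, had, .refl⟩)
  obtain ⟨x, hx⟩ := Multiset.exists_mem_of_ne_zero hd0
  exact ⟨x, h₁.forall_mem had ha x hx, h₂.forall_mem hbd hb x hx⟩

end ExpandStep

namespace RFGraph

variable {V Ed : Type} [DecidableEq V] (G : RFGraph V Ed)

def tSucc (p : V × ℤ) : Multiset (V × ℤ) := (G.emit p.1).val.map fun e => (G.r e, p.2 + 1)

lemma tcon_eq_addConGen_expandStep :
    G.tcon = addConGen (ExpandStep (fun p => G.emit p.1 ≠ ∅) G.tSucc) := by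
  have : G.TStep1 = ExpandStep (fun p => G.emit p.1 ≠ ∅) G.tSucc := by
    ext a b
    constructor
    · rintro ⟨v, i, hv, hne, rfl⟩
      exact ⟨(v, i), hv, hne, rfl⟩
    · rintro ⟨⟨v, i⟩, hv, hne, rfl⟩
      exact ⟨v, i, hv, hne, rfl⟩
  rw [tcon, this]

lemma isExpandClosed_reaches (u : V) :
    IsExpandClosed (fun p => G.emit p.1 ≠ ∅) G.tSucc {p | G.Reaches u p.1} := by
  rintro p hp - q hq
  obtain ⟨e, he, rfl⟩ := Multiset.mem_map.1 hq
  exact Relation.ReflTransGen.tail hp ⟨e, (G.mem_emit e p.1).1 he, rfl⟩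

def reachIdeal (u : V) : Set G.TM := {x | ∃ a, G.tcon.mk' a = x ∧ ∀ p ∈ a, G.Reaches u p.1}

lemma add_mem_reachIdeal (u : V) {x y : G.TM} (hx : x ∈ G.reachIdeal u)
    (hy : y ∈ G.reachIdeal u) : x + y ∈ G.reachIdeal u := by
  obtain ⟨a, rfl, ha⟩ := hx
  obtain ⟨b, rfl, hb⟩ := hy
  refine ⟨a + b, map_add _ _ _, fun p hp => ?_⟩
  rcases Multiset.mem_add.1 hp with hp | hp
  exacts [ha p hp, hb p hp]

lemma tshift_mem_reachIdeal (u : V) (n : ℤ) {x : G.TM} (hx : x ∈ G.reachIdeal u) :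
    G.tshift n x ∈ G.reachIdeal u := by
  obtain ⟨a, rfl, ha⟩ := hx
  refine ⟨shiftMul n a, rfl, fun p hp => ?_⟩
  obtain ⟨q, hq, rfl⟩ := Multiset.mem_map.1 hp
  exact ha q hq

lemma mem_reachIdeal_of_algLE (u : V) {x y : G.TM} (hxy : algLE x y) (hy : y ∈ G.reachIdeal u) :
    x ∈ G.reachIdeal u := by
  obtain ⟨b, rfl, hb⟩ := hy
  obtain ⟨c, hc⟩ := hxy
  obtain ⟨a, rfl⟩ := AddCon.mk'_surjective x
  obtain ⟨c, rfl⟩ := AddCon.mk'_surjective c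
  have hcon : G.tcon (a + c) b := (AddCon.eq _).1 ((map_add _ a c).trans hc.symm)
  rw [tcon_eq_addConGen_expandStep] at hcon
  obtain ⟨d, hd, hbd⟩ := addConGen_expandStep_iff_join.1 hcon
  obtain ⟨d₁, d₂, rfl, had₁, -⟩ := exists_add_of_reflTransGen_expandStep hd
  refine ⟨d₁, ?_, fun p hp => (G.isExpandClosed_reaches u).forall_mem hbd hb p
    (Multiset.mem_add.2 (Or.inl hp))⟩
  refine (AddCon.eq _).2 ?_
  rw [tcon_eq_addConGen_expandStep]
  exact addConGen_expandStep_iff_join.2 ⟨d₁, .refl, had₁⟩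

lemma reachIdeal_isOrderIdeal (u : V) : G.IsOrderIdeal (G.reachIdeal u) :=
  ⟨⟨0, map_zero _, fun _ hp => absurd hp (Multiset.notMem_zero _)⟩,
    fun _ _ => G.add_mem_reachIdeal u, fun n _ => G.tshift_mem_reachIdeal u n,
    fun _ _ => G.mem_reachIdeal_of_algLE u⟩

lemma genIdeal_subset_reachIdeal (u : V) : G.genIdeal u ⊆ G.reachIdeal u :=
  Set.sInter_subset_of_mem ⟨G.reachIdeal_isOrderIdeal u,
    ⟨{(u, 0)}, rfl, fun _ hp => Multiset.mem_singleton.1 hp ▸ .refl⟩⟩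

end RFGraph

/-- If the `ℤ`-order-ideals `⟨u⟩` and `⟨v⟩` of `M_E^{gr}` have nonzero intersection,
then `u` and `v` are downward directed. -/
theorem ideals_downward_directed {V Ed : Type} [DecidableEq V] (G : RFGraph V Ed)
    (u v : V)
    (h : ∃ x : G.TM, x ≠ 0 ∧ x ∈ G.genIdeal u ∧ x ∈ G.genIdeal v) :
    ∃ w : V, G.Reaches u w ∧ G.Reaches v w := by
  obtain ⟨x, hx0, hxu, hxv⟩ := h
  obtain ⟨a, rfl, ha⟩ := G.genIdeal_subset_reachIdeal u hxu
  obtain ⟨b, hab, hb⟩ := G.genIdeal_subset_reachIdeal v hxv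
  have hab : G.tcon a b := (AddCon.eq _).1 hab.symm
  have ha0 : ¬ G.tcon a 0 := fun h0 => hx0 ((AddCon.eq _).2 h0)
  rw [G.tcon_eq_addConGen_expandStep] at hab ha0
  obtain ⟨p, hpu, hpv⟩ := (G.isExpandClosed_reaches u).exists_mem_inter
    (G.isExpandClosed_reaches v) hab ha0 ha hb
  exact ⟨p.1, hpu, hpv⟩
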